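/- arXiv:2406.13699 — 2 statements merged into one kernel-verified Lean document; each statement's English description precedes it below -/
import Mathlib

section
/- Let d ≥ 2, let n be a real number with n ≥ d, and let v : ℝ^d → ℝ be a positive C³ function. Set P := (1/v)·((n/2)‖∇v‖² + c_n). Then at every point of ℝ^d one has the identity div( v^(1-n)·( (n/2)∇(‖∇v‖²) - n(Δv)∇v + (n-1)P∇v ) ) = n·v^(1-n)·( |∇²v|² - (Δv)²/n ) + v·(Δv - P)·Δ(v^(1-n)), where |∇²v|² denotes the sum of the squares of all second partial derivatives of v (the squared Frobenius norm of the Hessian) and div denotes the Euclidean divergence. -/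
open MeasureTheory Metric

/-- The Euclidean Laplacian: the trace of the Hessian. -/
noncomputable def lap {d : ℕ} (u : EuclideanSpace ℝ (Fin d) → ℝ)
    (x : EuclideanSpace ℝ (Fin d)) : ℝ :=
  ∑ i, iteratedFDeriv ℝ 2 u x ![EuclideanSpace.single i 1, EuclideanSpace.single i 1]

/-- The Euclidean divergence of a vector field. -/
noncomputable def diverg {d : ℕ} (V : EuclideanSpace ℝ (Fin d) → EuclideanSpace ℝ (Fin d))
    (x : EuclideanSpace ℝ (Fin d)) : ℝ :=
  ∑ i, fderiv ℝ V x (EuclideanSpace.single i 1) i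

/-- The squared Frobenius norm of the Hessian: the sum of the squares of all
second partial derivatives. -/
noncomputable def hessNormSq {d : ℕ} (v : EuclideanSpace ℝ (Fin d) → ℝ)
    (x : EuclideanSpace ℝ (Fin d)) : ℝ :=
  ∑ i, ∑ j,
    (iteratedFDeriv ℝ 2 v x ![EuclideanSpace.single i 1, EuclideanSpace.single j 1]) ^ 2

/-- The constant `c_n`: `2/(n-2)` for `n > 2` and `1/2` for `n = 2`. -/
noncomputable def cExp (n : ℝ) : ℝ := if 2 < n then 2 / (n - 2) else 1 / 2

/-!
Write `W = v ^ (1 - n)` and `Y` for the bracketed field, so that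
`div (W • Y) = ⟪∇W, Y⟫ + W · div Y`. The third-order terms of `div Y`, coming from
`div ∇‖∇v‖²` and `div (Δv ∇v)`, cancel by the flat Bochner formula
`½ Δ‖∇v‖² = |∇²v|² + ⟪∇v, ∇Δv⟫`. The mixed term `⟪∇‖∇v‖², ∇v⟫` enters both `⟪∇W, Y⟫` and
`W · ⟪∇P, ∇v⟫` with opposite signs, and what is left is an algebraic identity in `‖∇v‖²`,
`Δv`, `|∇²v|²`, `c_n` and powers of `v`.
-/

open InnerProductSpace
open scoped RealInnerProductSpace

section Gradient

variable {F : Type*} [NormedAddCommGroup F] [InnerProductSpace ℝ F] {f : F → ℝ} {x : F}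

theorem fderiv_rpow_const (hf : DifferentiableAt ℝ f x) (hx : 0 < f x) (p : ℝ) :
    fderiv ℝ (fun y => f y ^ p) x = (p * f x ^ (p - 1)) • fderiv ℝ f x :=
  (hf.hasFDerivAt.rpow_const (Or.inl hx.ne')).fderiv

variable [CompleteSpace F]

theorem gradient_rpow_const (hf : DifferentiableAt ℝ f x) (hx : 0 < f x) (p : ℝ) :
    gradient (fun y => f y ^ p) x = (p * f x ^ (p - 1)) • gradient f x := by
  rw [gradient, fderiv_rpow_const hf hx, map_smul]
  rfl

theorem ContDiff.gradient {k n : WithTop ℕ∞} (hf : ContDiff ℝ n f) (hk : k + 1 ≤ n) :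
    ContDiff ℝ k (gradient f) :=
  (toDual ℝ F).symm.contDiff.comp (hf.fderiv_right hk)

end Gradient

local notation "ℝ^" d:max => EuclideanSpace ℝ (Fin d)

variable {d : ℕ}

noncomputable def partialDeriv (i : Fin d) (f : ℝ^d → ℝ) : ℝ^d → ℝ :=
  fun x => fderiv ℝ f x (EuclideanSpace.single i 1)

section PartialDeriv

variable {f g : ℝ^d → ℝ} {x : ℝ^d}

theorem toDual_symm_apply_ofLp (L : StrongDual ℝ (ℝ^d)) (i : Fin d) :
    (toDual ℝ (ℝ^d)).symm L i = L (EuclideanSpace.single i 1) := by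
  rw [← toDual_symm_apply, EuclideanSpace.inner_single_right]
  simp

theorem gradient_apply (f : ℝ^d → ℝ) (x : ℝ^d) (i : Fin d) :
    gradient f x i = partialDeriv i f x :=
  toDual_symm_apply_ofLp _ i

theorem inner_gradient_eq_sum (f g : ℝ^d → ℝ) (x : ℝ^d) :
    ⟪gradient f x, gradient g x⟫ = ∑ i, partialDeriv i f x * partialDeriv i g x := by
  simp only [PiLp.inner_apply, gradient_apply, RCLike.inner_apply, conj_trivial, mul_comm]

theorem partialDeriv_partialDeriv (hf : DifferentiableAt ℝ (fderiv ℝ f) x) (i j : Fin d) :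
    partialDeriv i (partialDeriv j f) x =
      fderiv ℝ (fderiv ℝ f) x (EuclideanSpace.single i 1) (EuclideanSpace.single j 1) := by
  unfold partialDeriv
  rw [fderiv_clm_apply hf (differentiableAt_const _)]
  simp

theorem partialDeriv_comm (hf : ContDiffAt ℝ 2 f x) (i j : Fin d) :
    partialDeriv i (partialDeriv j f) x = partialDeriv j (partialDeriv i f) x := by
  have hdf : DifferentiableAt ℝ (fderiv ℝ f) x :=
    (hf.fderiv_right (m := 1) le_rfl).differentiableAt one_ne_zero
  rw [partialDeriv_partialDeriv hdf, partialDeriv_partialDeriv hdf,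
    hf.isSymmSndFDerivAt (by simp)]

theorem ContDiff.partialDeriv {k n : WithTop ℕ∞} (hf : ContDiff ℝ n f) (hk : k + 1 ≤ n)
    (i : Fin d) : ContDiff ℝ k (partialDeriv i f) :=
  ((ContinuousLinearMap.apply ℝ ℝ (EuclideanSpace.single i (1 : ℝ))).contDiff.comp
    (hf.fderiv_right hk) :)

theorem partialDeriv_const_mul (hf : DifferentiableAt ℝ f x) (c : ℝ) (i : Fin d) :
    partialDeriv i (fun y => c * f y) x = c * partialDeriv i f x := by
  simp [partialDeriv, fderiv_const_mul hf c]

theorem partialDeriv_mul (hf : DifferentiableAt ℝ f x) (hg : DifferentiableAt ℝ g x)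
    (i : Fin d) :
    partialDeriv i (fun y => f y * g y) x =
      f x * partialDeriv i g x + g x * partialDeriv i f x := by
  simp [partialDeriv, fderiv_fun_mul hf hg]

theorem partialDeriv_sum {ι : Type*} [Fintype ι] {F : ι → ℝ^d → ℝ}
    (hF : ∀ j, DifferentiableAt ℝ (F j) x) (i : Fin d) :
    partialDeriv i (fun y => ∑ j, F j y) x = ∑ j, partialDeriv i (F j) x := by
  simp [partialDeriv, fderiv_fun_sum fun j _ => hF j]

theorem lap_eq_sum_partialDeriv (hf : DifferentiableAt ℝ (fderiv ℝ f) x) :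
    lap f x = ∑ i, partialDeriv i (partialDeriv i f) x := by
  simp [lap, iteratedFDeriv_two_apply, partialDeriv_partialDeriv hf]

theorem hessNormSq_eq_sum (hf : DifferentiableAt ℝ (fderiv ℝ f) x) :
    hessNormSq f x = ∑ i, ∑ j, partialDeriv i (partialDeriv j f) x ^ 2 := by
  simp [hessNormSq, iteratedFDeriv_two_apply, partialDeriv_partialDeriv hf]

end PartialDeriv

section Divergence

variable {f : ℝ^d → ℝ} {V W : ℝ^d → ℝ^d} {x : ℝ^d}

theorem diverg_add (hV : DifferentiableAt ℝ V x) (hW : DifferentiableAt ℝ W x) :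
    diverg (fun y => V y + W y) x = diverg V x + diverg W x := by
  simp [diverg, fderiv_fun_add hV hW, Finset.sum_add_distrib]

theorem diverg_sub (hV : DifferentiableAt ℝ V x) (hW : DifferentiableAt ℝ W x) :
    diverg (fun y => V y - W y) x = diverg V x - diverg W x := by
  simp [diverg, fderiv_fun_sub hV hW, Finset.sum_sub_distrib]

theorem diverg_const_smul (hV : DifferentiableAt ℝ V x) (c : ℝ) :
    diverg (fun y => c • V y) x = c * diverg V x := by
  simp [diverg, fderiv_fun_const_smul hV c, Finset.mul_sum]

theorem diverg_smul (hf : DifferentiableAt ℝ f x) (hV : DifferentiableAt ℝ V x) :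
    diverg (fun y => f y • V y) x = fderiv ℝ f x (V x) + f x * diverg V x := by
  have hfV : fderiv ℝ f x (V x) = ∑ i, partialDeriv i f x * V x i := by
    simp [← inner_gradient_left, PiLp.inner_apply, gradient_apply, mul_comm]
  simp [diverg, fderiv_fun_smul hf hV, hfV, Finset.mul_sum, Finset.sum_add_distrib, partialDeriv,
    add_comm, mul_comm]

theorem diverg_gradient (u : ℝ^d → ℝ) (x : ℝ^d) : diverg (gradient u) x = lap u x := by
  have hgrad : gradient u = (toDual ℝ (ℝ^d)).symm ∘ fderiv ℝ u := rfl
  refine Finset.sum_congr rfl fun i _ => ?_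
  rw [hgrad, LinearIsometryEquiv.comp_fderiv, iteratedFDeriv_two_apply]
  exact toDual_symm_apply_ofLp _ i

theorem ContDiff.lap {k n : WithTop ℕ∞} (hf : ContDiff ℝ n f) (hk : k + 2 ≤ n) :
    ContDiff ℝ k (lap f) :=
  ContDiff.sum fun i _ => (ContinuousMultilinearMap.apply ℝ (fun _ : Fin 2 => ℝ^d) ℝ
    ![EuclideanSpace.single i 1, EuclideanSpace.single i 1]).contDiff.comp
    (hf.iteratedFDeriv_right hk)

theorem lap_rpow_const {v : ℝ^d → ℝ} (hv : ContDiff ℝ 2 v) (hpos : ∀ y, 0 < v y) (p : ℝ)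
    (x : ℝ^d) :
    lap (fun y => v y ^ p) x =
      p * v x ^ (p - 1) * lap v x + p * (p - 1) * v x ^ (p - 2) * ‖gradient v x‖ ^ 2 := by
  have hv' : Differentiable ℝ v := hv.differentiable two_ne_zero
  have hgrad : gradient (fun y => v y ^ p) = fun y => (p * v y ^ (p - 1)) • gradient v y :=
    funext fun y => gradient_rpow_const (hv' y) (hpos y) p
  have hcoeff : DifferentiableAt ℝ (fun y => p * v y ^ (p - 1)) x :=
    ((hv' x).rpow_const (Or.inl (hpos x).ne')).const_mul p
  have hgradv : DifferentiableAt ℝ (gradient v) x :=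
    (hv.gradient (k := 1) le_rfl).differentiable one_ne_zero x
  rw [← diverg_gradient, hgrad, diverg_smul hcoeff hgradv, diverg_gradient,
    fderiv_const_mul ((hv' x).rpow_const (Or.inl (hpos x).ne')),
    fderiv_rpow_const (hv' x) (hpos x),
    smul_apply, smul_apply, ← inner_gradient_left,
    real_inner_self_eq_norm_sq, smul_eq_mul, smul_eq_mul, sub_sub, one_add_one_eq_two]
  ring

end Divergence

section Bochner

variable {v : ℝ^d → ℝ}

theorem norm_sq_gradient_eq_sum (v : ℝ^d → ℝ) :
    (fun y => ‖gradient v y‖ ^ 2) = fun y => ∑ j, partialDeriv j v y * partialDeriv j v y :=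
  funext fun y => by rw [← real_inner_self_eq_norm_sq, inner_gradient_eq_sum]

theorem partialDeriv_norm_sq_gradient (hv : ContDiff ℝ 2 v) (i : Fin d) :
    partialDeriv i (fun y => ‖gradient v y‖ ^ 2) =
      fun y => 2 * ∑ j, partialDeriv j v y * partialDeriv i (partialDeriv j v) y := by
  have hd : ∀ j y, DifferentiableAt ℝ (partialDeriv j v) y :=
    fun j => (hv.partialDeriv (k := 1) (by norm_num) j).differentiable one_ne_zero
  funext y
  rw [norm_sq_gradient_eq_sum,
    partialDeriv_sum (F := fun j y => partialDeriv j v y * partialDeriv j v y)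
      fun j => (hd j y).mul (hd j y), Finset.mul_sum]
  exact Finset.sum_congr rfl fun j _ => by rw [partialDeriv_mul (hd j y) (hd j y)]; ring

theorem partialDeriv_partialDeriv_partialDeriv_comm (hv : ContDiff ℝ 3 v) (i j : Fin d)
    (x : ℝ^d) :
    partialDeriv j (partialDeriv i (partialDeriv i v)) x =
      partialDeriv i (partialDeriv i (partialDeriv j v)) x := by
  have hji : partialDeriv j (partialDeriv i v) = partialDeriv i (partialDeriv j v) :=
    funext fun y => partialDeriv_comm ((hv.of_le (by norm_num)).contDiffAt) j i
  rw [partialDeriv_comm ((hv.partialDeriv (k := 2) (by norm_num) i).contDiffAt) j i, hji]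

theorem partialDeriv_lap (hv : ContDiff ℝ 3 v) (i : Fin d) (x : ℝ^d) :
    partialDeriv i (lap v) x = ∑ k, partialDeriv k (partialDeriv k (partialDeriv i v)) x := by
  have hlap : lap v = fun y => ∑ k, partialDeriv k (partialDeriv k v) y :=
    funext fun y => lap_eq_sum_partialDeriv
      ((hv.fderiv_right (m := 2) (by norm_num)).differentiable two_ne_zero y)
  rw [hlap, partialDeriv_sum (F := fun k => partialDeriv k (partialDeriv k v)) fun k =>
    ContDiff.differentiable
      ((hv.partialDeriv (k := 2) (by norm_num) k).partialDeriv (k := 1) (by norm_num) k)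
      one_ne_zero x]
  exact Finset.sum_congr rfl fun k _ => partialDeriv_partialDeriv_partialDeriv_comm hv k i x

theorem lap_norm_sq_gradient (hv : ContDiff ℝ 3 v) (x : ℝ^d) :
    lap (fun y => ‖gradient v y‖ ^ 2) x =
      2 * hessNormSq v x + 2 * ⟪gradient v x, gradient (lap v) x⟫ := by
  have d1 : ∀ j, DifferentiableAt ℝ (partialDeriv j v) x :=
    fun j => (hv.partialDeriv (k := 2) (by norm_num) j).differentiable two_ne_zero x
  have d2 : ∀ i j, DifferentiableAt ℝ (partialDeriv i (partialDeriv j v)) x := fun i j =>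
    ContDiff.differentiable
      ((hv.partialDeriv (k := 2) (by norm_num) j).partialDeriv (k := 1) (by norm_num) i)
      one_ne_zero x
  have hG : ∀ i, partialDeriv i (partialDeriv i fun y => ‖gradient v y‖ ^ 2) x =
      2 * ∑ j, (partialDeriv i (partialDeriv j v) x ^ 2 +
        partialDeriv j v x * partialDeriv i (partialDeriv i (partialDeriv j v)) x) := by
    intro i
    rw [partialDeriv_norm_sq_gradient (hv.of_le (by norm_num)),
      partialDeriv_const_mul (DifferentiableAt.fun_sum (A := fun j y =>
        partialDeriv j v y * partialDeriv i (partialDeriv j v) y) fun j _ => (d1 j).mul (d2 i j)),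
      partialDeriv_sum (F := fun j y => partialDeriv j v y * partialDeriv i (partialDeriv j v) y)
        fun j => (d1 j).mul (d2 i j)]
    exact congrArg _ (Finset.sum_congr rfl fun j _ => by
      rw [partialDeriv_mul (d1 j) (d2 i j)]; ring)
  have hGC2 : ContDiff ℝ 2 (fun y => ‖gradient v y‖ ^ 2) :=
    (hv.gradient (k := 2) (by norm_num)).norm_sq ℝ
  rw [lap_eq_sum_partialDeriv ((hGC2.fderiv_right (m := 1) (by norm_num)).differentiable
      one_ne_zero x),
    hessNormSq_eq_sum ((hv.fderiv_right (m := 2) (by norm_num)).differentiable two_ne_zero x),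
    inner_gradient_eq_sum]
  simp only [hG, partialDeriv_lap hv, Finset.mul_sum, mul_add, Finset.sum_add_distrib]
  rw [Finset.sum_comm (γ := Fin d) (f := fun i j => 2 * (partialDeriv j v x * _))]

end Bochner

section PFunction

variable {n : ℝ} {v P : ℝ^d → ℝ} {x : ℝ^d}

noncomputable def pFunction (n : ℝ) (v : ℝ^d → ℝ) (x : ℝ^d) : ℝ :=
  (1 / v x) * ((n / 2) * ‖gradient v x‖ ^ 2 + cExp n)

noncomputable def pFunctionField (n : ℝ) (v P : ℝ^d → ℝ) (y : ℝ^d) : ℝ^d :=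
  (n / 2) • gradient (fun z => ‖gradient v z‖ ^ 2) y - (n * lap v y) • gradient v y
    + ((n - 1) * P y) • gradient v y

theorem hasFDerivAt_pFunction (hv : ContDiff ℝ 2 v) (hx : 0 < v x) :
    HasFDerivAt (pFunction n v)
      ((v x)⁻¹ • (n / 2) • fderiv ℝ (fun z => ‖gradient v z‖ ^ 2) x
        - (pFunction n v x / v x) • fderiv ℝ v x) x := by
  have hG : DifferentiableAt ℝ (fun z => ‖gradient v z‖ ^ 2) x :=
    ((hv.gradient (k := 1) (by norm_num)).norm_sq ℝ).differentiable one_ne_zero x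
  have hP : pFunction n v = fun y => (v y)⁻¹ * ((n / 2) * ‖gradient v y‖ ^ 2 + cExp n) :=
    funext fun y => by rw [pFunction, one_div]
  rw [hP]
  refine (((hasDerivAt_inv hx.ne').comp_hasFDerivAt x
    (hv.differentiable two_ne_zero x).hasFDerivAt).mul
    ((hG.hasFDerivAt.const_mul (n / 2)).add_const (cExp n))).congr_fderiv ?_
  ext w
  simp only [Function.comp_apply, neg_smul, smul_neg, add_apply, smul_apply, smul_eq_mul,
    neg_apply, sub_apply]
  field_simp
  ring

theorem inner_gradient_pFunction (hv : ContDiff ℝ 2 v) (hx : 0 < v x) :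
    ⟪gradient (pFunction n v) x, gradient v x⟫ =
      n / 2 * ⟪gradient (fun z => ‖gradient v z‖ ^ 2) x, gradient v x⟫ / v x
        - pFunction n v x * ‖gradient v x‖ ^ 2 / v x := by
  rw [inner_gradient_left, (hasFDerivAt_pFunction hv hx).fderiv]
  simp only [sub_apply, smul_apply, smul_eq_mul, ← inner_gradient_left,
    real_inner_self_eq_norm_sq]
  field_simp

theorem differentiableAt_gradient_norm_sq_gradient (hv : ContDiff ℝ 3 v) (x : ℝ^d) :
    DifferentiableAt ℝ (gradient fun z => ‖gradient v z‖ ^ 2) x :=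
  ContDiff.differentiable
    (((hv.gradient (k := 2) (by norm_num)).norm_sq ℝ).gradient (k := 1) (by norm_num))
    one_ne_zero x

theorem differentiableAt_pFunctionField (hv : ContDiff ℝ 3 v) (hP : DifferentiableAt ℝ P x) :
    DifferentiableAt ℝ (pFunctionField n v P) x := by
  have dgradv : DifferentiableAt ℝ (gradient v) x :=
    (hv.gradient (k := 2) (by norm_num)).differentiable two_ne_zero x
  have dgradG := differentiableAt_gradient_norm_sq_gradient hv x
  have dlap : DifferentiableAt ℝ (lap v) x :=
    (hv.lap (k := 1) (by norm_num)).differentiable one_ne_zero x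
  exact ((dgradG.const_smul (n / 2)).fun_sub ((dlap.const_mul n).smul dgradv)).fun_add
    ((hP.const_mul (n - 1)).smul dgradv)

theorem diverg_pFunctionField (hv : ContDiff ℝ 3 v) (hP : DifferentiableAt ℝ P x) :
    diverg (pFunctionField n v P) x = n * (hessNormSq v x - lap v x ^ 2)
      + (n - 1) * (⟪gradient P x, gradient v x⟫ + P x * lap v x) := by
  have dgradv : DifferentiableAt ℝ (gradient v) x :=
    (hv.gradient (k := 2) (by norm_num)).differentiable two_ne_zero x
  have dgradG := differentiableAt_gradient_norm_sq_gradient hv x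
  have dlap : DifferentiableAt ℝ (lap v) x :=
    (hv.lap (k := 1) (by norm_num)).differentiable one_ne_zero x
  have dA :
      DifferentiableAt ℝ (fun y => (n / 2) • gradient (fun z => ‖gradient v z‖ ^ 2) y) x :=
    dgradG.const_smul (n / 2)
  have dB : DifferentiableAt ℝ (fun y => (n * lap v y) • gradient v y) x :=
    (dlap.const_mul n).smul dgradv
  have dC : DifferentiableAt ℝ (fun y => ((n - 1) * P y) • gradient v y) x :=
    (hP.const_mul (n - 1)).smul dgradv
  unfold pFunctionField
  rw [diverg_add (dA.fun_sub dB) dC, diverg_sub dA dB, diverg_const_smul dgradG,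
    diverg_smul (dlap.const_mul n) dgradv, diverg_smul (hP.const_mul (n - 1)) dgradv,
    diverg_gradient, diverg_gradient, lap_norm_sq_gradient hv, fderiv_const_mul dlap,
    fderiv_const_mul hP]
  simp only [smul_apply, smul_eq_mul, ← inner_gradient_left, real_inner_comm]
  ring

end PFunction

/-- Lemma 2.1, Euclidean case: the fundamental divergence identity for the P-function. -/
theorem stmt_6 (d : ℕ) (hd : 2 ≤ d) (n : ℝ) (hn : (d : ℝ) ≤ n)
    (v : EuclideanSpace ℝ (Fin d) → ℝ) (hv : ContDiff ℝ 3 v) (hvpos : ∀ x, 0 < v x)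
    (P : EuclideanSpace ℝ (Fin d) → ℝ)
    (hP : ∀ x, P x = (1 / v x) * ((n / 2) * ‖gradient v x‖ ^ 2 + cExp n)) :
    ∀ x,
      diverg (fun y => (v y) ^ ((1 : ℝ) - n) •
          ((n / 2) • gradient (fun z => ‖gradient v z‖ ^ 2) y
            - (n * lap v y) • gradient v y + ((n - 1) * P y) • gradient v y)) x
      = n * (v x) ^ ((1 : ℝ) - n) * (hessNormSq v x - (lap v x) ^ 2 / n)
        + v x * (lap v x - P x) * lap (fun y => (v y) ^ ((1 : ℝ) - n)) x := by
  intro x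
  obtain rfl : P = pFunction n v := funext hP
  have hn0 : n ≠ 0 := by
    have : (2 : ℝ) ≤ d := by exact_mod_cast hd
    linarith
  have hv2 : ContDiff ℝ 2 v := hv.of_le (by norm_num)
  have ha := hvpos x
  have dv : DifferentiableAt ℝ v x := hv2.differentiable two_ne_zero x
  have dP := (hasFDerivAt_pFunction (n := n) hv2 ha).differentiableAt
  change diverg (fun y => v y ^ (1 - n) • pFunctionField n v (pFunction n v) y) x = _
  rw [diverg_smul (dv.rpow_const (Or.inl ha.ne')) (differentiableAt_pFunctionField hv dP),
    ← inner_gradient_left, gradient_rpow_const dv ha, diverg_pFunctionField hv dP,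
    inner_gradient_pFunction hv2 ha, lap_rpow_const hv2 hvpos]
  simp only [pFunctionField, real_inner_smul_left, inner_add_right, inner_sub_right,
    real_inner_smul_right, real_inner_self_eq_norm_sq, real_inner_comm]
  have e0 : v x ^ (1 - n) = v x ^ (1 - n - 1) * v x := by
    rw [← Real.rpow_add_one ha.ne', sub_add_cancel]
  have e1 : v x ^ (1 - n - 1) = v x ^ (1 - n - 2) * v x := by
    rw [← Real.rpow_add_one ha.ne']; ring_nf
  rw [e0, e1, pFunction]
  field_simp
  ring
end

section
/- Let d ≥ 2, let n be a real number with n ≥ d, and let v : ℝ^d → ℝ be a positive C³ function satisfying Δv = P at every point, where P := (1/v)·((n/2)‖∇v‖² + c_n). Then for every real number q and every compactly supported C¹ function ψ : ℝ^d → ℝ, one has (n/2 + 1 - q)·∫ v^(-q)·‖∇v‖²·ψ dx + c_n·∫ v^(-q)·ψ dx = - ∫ v^(1-q)·⟨∇v, ∇ψ⟩ dx, where all integrals are over ℝ^d with respect to Lebesgue measure. -/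
open MeasureTheory Metric
open scoped RealInnerProductSpace

/-!
Test `Δv = P` against `φ = v^(1-q) ψ` and apply Green's first identity
`∫ Δv φ = -∫ ⟪∇v, ∇φ⟫`. Since `v P = (n/2)‖∇v‖² + c_n`, the left side is
`(n/2) ∫ v^(-q) ‖∇v‖² ψ + c_n ∫ v^(-q) ψ`, while by the product rule
`⟪∇v, ∇φ⟫ = (1-q) v^(-q) ‖∇v‖² ψ + v^(1-q) ⟪∇v, ∇ψ⟫`.
-/

open InnerProductSpace
open scoped Gradient Laplacian

section Gradient

variable {E : Type*} [NormedAddCommGroup E] [InnerProductSpace ℝ E] [CompleteSpace E]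

theorem ContDiff.continuous_gradient {f : E → ℝ} (hf : ContDiff ℝ 1 f) : Continuous (∇ f) :=
  (toDual ℝ E).symm.continuous.comp (hf.continuous_fderiv one_ne_zero)

theorem HasCompactSupport.gradient {f : E → ℝ} (hf : HasCompactSupport f) :
    HasCompactSupport (∇ f) :=
  (hf.fderiv (𝕜 := ℝ)).comp_left (map_zero _)

theorem inner_gradient_rpow_mul {v ψ : E → ℝ} {x : E} (hv : DifferentiableAt ℝ v x)
    (hvx : v x ≠ 0) (hψ : DifferentiableAt ℝ ψ x) (p : ℝ) :
    ⟪∇ v x, ∇ (fun y => v y ^ p * ψ y) x⟫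
      = p * v x ^ (p - 1) * ‖∇ v x‖ ^ 2 * ψ x + v x ^ p * ⟪∇ v x, ∇ ψ x⟫ := by
  rw [real_inner_comm, inner_gradient_left,
    ((hv.hasFDerivAt.rpow_const (Or.inl hvx)).fun_mul hψ.hasFDerivAt).fderiv,
    real_inner_comm, inner_gradient_left, ← real_inner_self_eq_norm_sq, inner_gradient_left]
  simp only [add_apply, smul_apply, smul_eq_mul]
  ring

end Gradient

section Integrable

variable {E : Type*} [NormedAddCommGroup E] [NormedSpace ℝ E] [MeasurableSpace E]
  [OpensMeasurableSpace E] {μ : Measure E} [IsFiniteMeasureOnCompacts μ] {u φ : E → ℝ}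

theorem integrable_fderiv_fderiv_apply_mul (hu : ContDiff ℝ 2 u) (hφ : Continuous φ)
    (hφc : HasCompactSupport φ) (w : E) :
    Integrable (fun x => fderiv ℝ (fderiv ℝ u) x w w * φ x) μ :=
  ((((hu.fderiv_right le_rfl).continuous_fderiv one_ne_zero).clm_apply
    continuous_const).clm_apply continuous_const).mul hφ
    |>.integrable_of_hasCompactSupport hφc.mul_left

theorem integrable_fderiv_apply_mul_fderiv_apply (hu : ContDiff ℝ 1 u) (hφ : ContDiff ℝ 1 φ)
    (hφc : HasCompactSupport φ) (w : E) :
    Integrable (fun x => fderiv ℝ u x w * fderiv ℝ φ x w) μ :=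
  ((hu.continuous_fderiv one_ne_zero).clm_apply continuous_const).mul
    ((hφ.continuous_fderiv one_ne_zero).clm_apply continuous_const)
    |>.integrable_of_hasCompactSupport (hφc.fderiv_apply (𝕜 := ℝ) w).mul_left

end Integrable

section Green

variable {E : Type*} [NormedAddCommGroup E] [InnerProductSpace ℝ E] [FiniteDimensional ℝ E]
  [MeasurableSpace E] [BorelSpace E] {μ : Measure E} [μ.IsAddHaarMeasure]
  {u φ : E → ℝ}

theorem integral_fderiv_mul_fderiv_eq_neg_integral_fderiv_fderiv_mul (hu : ContDiff ℝ 2 u)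
    (hφ : ContDiff ℝ 1 φ) (hφc : HasCompactSupport φ) (w : E) :
    ∫ x, fderiv ℝ u x w * fderiv ℝ φ x w ∂μ = -∫ x, fderiv ℝ (fderiv ℝ u) x w w * φ x ∂μ := by
  have hDu : ContDiff ℝ 1 (fderiv ℝ u) := hu.fderiv_right le_rfl
  have hD2 : ∀ x, fderiv ℝ (fun y => fderiv ℝ u y w) x w = fderiv ℝ (fderiv ℝ u) x w w := by
    intro x
    rw [fderiv_clm_apply (hDu.differentiable one_ne_zero x) (differentiableAt_const _)]
    simp
  simp_rw [← hD2]
  refine integral_mul_fderiv_eq_neg_fderiv_mul_of_integrable ?_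
    (integrable_fderiv_apply_mul_fderiv_apply (hu.of_le (by norm_num)) hφ hφc w) ?_
    (fun x _ => (hDu.differentiable one_ne_zero).clm_apply (differentiable_const _) x)
    (fun x _ => hφ.differentiable one_ne_zero x)
  · simpa only [hD2] using integrable_fderiv_fderiv_apply_mul hu hφ.continuous hφc w
  · exact ((hDu.continuous.clm_apply continuous_const).mul hφ.continuous)
      |>.integrable_of_hasCompactSupport hφc.mul_left

theorem integral_laplacian_mul_eq_neg_integral_inner_gradient (hu : ContDiff ℝ 2 u)
    (hφ : ContDiff ℝ 1 φ) (hφc : HasCompactSupport φ) :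
    ∫ x, Δ u x * φ x ∂μ = -∫ x, ⟪∇ u x, ∇ φ x⟫ ∂μ := by
  let b := stdOrthonormalBasis ℝ E
  have hΔ : ∀ x, Δ u x * φ x = ∑ i, fderiv ℝ (fderiv ℝ u) x (b i) (b i) * φ x := by
    simp [laplacian_eq_iteratedFDeriv_orthonormalBasis u b, iteratedFDeriv_two_apply,
      Finset.sum_mul]
  have hinner : ∀ x, ⟪∇ u x, ∇ φ x⟫ = ∑ i, fderiv ℝ u x (b i) * fderiv ℝ φ x (b i) := by
    intro x
    rw [← b.sum_inner_mul_inner]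
    simp
  simp_rw [hΔ, hinner]
  rw [integral_finsetSum _ fun i _ => integrable_fderiv_fderiv_apply_mul hu hφ.continuous hφc _,
    integral_finsetSum _ fun i _ =>
      integrable_fderiv_apply_mul_fderiv_apply (hu.of_le (by norm_num)) hφ hφc _,
    ← Finset.sum_neg_distrib]
  exact Finset.sum_congr rfl fun i _ => (neg_eq_iff_eq_neg.mpr
    (integral_fderiv_mul_fderiv_eq_neg_integral_fderiv_fderiv_mul hu hφ hφc (b i))).symm

end Green

theorem lap_eq_laplacian {d : ℕ} (u : EuclideanSpace ℝ (Fin d) → ℝ) : lap u = Δ u := by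
  ext x
  simp [lap, laplacian_eq_iteratedFDeriv_orthonormalBasis u (EuclideanSpace.basisFun (Fin d) ℝ)]

theorem stmt_9_general (d : ℕ) (n : ℝ)
    (v : EuclideanSpace ℝ (Fin d) → ℝ) (hv : ContDiff ℝ 3 v) (hvpos : ∀ x, 0 < v x)
    (P : EuclideanSpace ℝ (Fin d) → ℝ)
    (hP : ∀ x, P x = (1 / v x) * ((n / 2) * ‖gradient v x‖ ^ 2 + cExp n))
    (heq : ∀ x, lap v x = P x) :
    ∀ (q : ℝ) (ψ : EuclideanSpace ℝ (Fin d) → ℝ),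
      ContDiff ℝ 1 ψ → HasCompactSupport ψ →
      (n / 2 + 1 - q) * (∫ x, (v x) ^ (-q) * ‖gradient v x‖ ^ 2 * ψ x ∂volume)
        + cExp n * (∫ x, (v x) ^ (-q) * ψ x ∂volume)
      = -∫ x, (v x) ^ (1 - q) * ⟪gradient v x, gradient ψ x⟫ ∂volume := by
  intro q ψ hψ hψc
  have hv1 : ContDiff ℝ 1 v := hv.of_le (by norm_num)
  have hv2 : ContDiff ℝ 2 v := hv.of_le (by norm_num)
  have hvne : ∀ x, v x ≠ 0 := fun x => (hvpos x).ne'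
  have hφ : ContDiff ℝ 1 fun x => v x ^ (1 - q) * ψ x :=
    (hv1.rpow_const_of_ne hvne).mul hψ
  have green :=
    integral_laplacian_mul_eq_neg_integral_inner_gradient (μ := volume) hv2 hφ hψc.mul_left
  have hlap : ∀ x, Δ v x * (v x ^ (1 - q) * ψ x)
      = n / 2 * (v x ^ (-q) * ‖∇ v x‖ ^ 2 * ψ x) + cExp n * (v x ^ (-q) * ψ x) := by
    intro x
    rw [← lap_eq_laplacian, heq, hP, sub_eq_add_neg, Real.rpow_add (hvpos x), Real.rpow_one]
    field_simp [hvne x]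
  have hgrad : ∀ x, ⟪∇ v x, ∇ (fun y => v y ^ (1 - q) * ψ y) x⟫
      = (1 - q) * (v x ^ (-q) * ‖∇ v x‖ ^ 2 * ψ x) + v x ^ (1 - q) * ⟪∇ v x, ∇ ψ x⟫ := by
    intro x
    rw [inner_gradient_rpow_mul (hv1.differentiable one_ne_zero x) (hvne x)
      (hψ.differentiable one_ne_zero x), sub_sub_cancel_left]
    ring
  have hvpow : ∀ p : ℝ, Continuous fun x => v x ^ p := fun p =>
    hv.continuous.rpow_const fun x => Or.inl (hvne x)
  have hgv : Continuous (∇ v) := hv1.continuous_gradient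
  have intA : Integrable (fun x => v x ^ (-q) * ‖∇ v x‖ ^ 2 * ψ x) :=
    ((hvpow _).mul (hgv.norm.pow 2)).mul hψ.continuous |>.integrable_of_hasCompactSupport
      hψc.mul_left
  have intB : Integrable (fun x => v x ^ (-q) * ψ x) :=
    (hvpow _).mul hψ.continuous |>.integrable_of_hasCompactSupport hψc.mul_left
  have intC : Integrable (fun x => v x ^ (1 - q) * ⟪∇ v x, ∇ ψ x⟫) :=
    (hvpow _).mul (hgv.inner hψ.continuous_gradient) |>.integrable_of_hasCompactSupport
      (hψc.gradient.mono fun x hx h0 => hx (by simp [h0])).mul_left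
  simp_rw [hlap, hgrad] at green
  rw [integral_add (intA.const_mul _) (intB.const_mul _), integral_add (intA.const_mul _) intC,
    integral_const_mul, integral_const_mul, integral_const_mul] at green
  linarith

/-- Lemma 4.1, Euclidean case: the basic integral identity for solutions of `Δv = P`. -/
theorem stmt_9 (d : ℕ) (hd : 2 ≤ d) (n : ℝ) (hn : (d : ℝ) ≤ n)
    (v : EuclideanSpace ℝ (Fin d) → ℝ) (hv : ContDiff ℝ 3 v) (hvpos : ∀ x, 0 < v x)
    (P : EuclideanSpace ℝ (Fin d) → ℝ)
    (hP : ∀ x, P x = (1 / v x) * ((n / 2) * ‖gradient v x‖ ^ 2 + cExp n))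
    (heq : ∀ x, lap v x = P x) :
    ∀ (q : ℝ) (ψ : EuclideanSpace ℝ (Fin d) → ℝ),
      ContDiff ℝ 1 ψ → HasCompactSupport ψ →
      (n / 2 + 1 - q) * (∫ x, (v x) ^ (-q) * ‖gradient v x‖ ^ 2 * ψ x ∂volume)
        + cExp n * (∫ x, (v x) ^ (-q) * ψ x ∂volume)
      = -∫ x, (v x) ^ (1 - q) * ⟪gradient v x, gradient ψ x⟫ ∂volume :=
  stmt_9_general d n v hv hvpos P hP heq
end
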